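/- Let R be a commutative ring, A a 2×2 matrix over R such that A − I₂ is invertible, β ∈ R², and k ∈ ℕ. Let F = X^{k+1} mod charpoly(A) with coefficients f₀ = F(0-th coefficient) and f₁ = F(1st coefficient). Then (f₁·A + (f₀ − 1)·I₂)·(A − I₂)^{−1}·β = Σ_{i=0}^{k} A^i·β, i.e., the projected matrix geometric sum algorithm correctly returns Σ_{i=0}^k A^i β. -/

import Mathlib

open Polynomial Matrix

/-! By Cayley–Hamilton, `A ^ (k + 1) = F(A) = f₁ A + f₀ I₂`, since `F` has degree below
`deg charpoly(A) = 2`; so the left side is `(A ^ (k + 1) - I₂)(A - I₂)⁻¹ β`, the geometric sum. -/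

theorem Polynomial.aeval_eq_smul_add_smul_one_of_natDegree_le_one {R A : Type*} [CommSemiring R]
    [Semiring A] [Algebra R A] {p : R[X]} (hp : p.natDegree ≤ 1) (a : A) :
    aeval a p = p.coeff 1 • a + p.coeff 0 • (1 : A) := by
  conv_lhs => rw [eq_X_add_C_of_natDegree_le_one hp]
  simp only [map_add, map_mul, aeval_C, aeval_X, Algebra.algebraMap_eq_smul_one, smul_mul_assoc,
    one_mul]

namespace Matrix

variable {n R : Type*} [Fintype n] [DecidableEq n] [CommRing R]

theorem natDegree_modByMonic_charpoly_lt [Nonempty n] [Nontrivial R] (M : Matrix n n R)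
    (p : R[X]) : (p %ₘ M.charpoly).natDegree < Fintype.card n := by
  have hdeg : M.charpoly.natDegree = Fintype.card n := M.charpoly_natDegree_eq_dim
  have hne : M.charpoly ≠ 1 := fun h => by simp [h, eq_comm, Fintype.card_ne_zero] at hdeg
  exact hdeg ▸ natDegree_modByMonic_lt p M.charpoly_monic hne

theorem pow_eq_smul_add_smul_one_of_fin_two (A : Matrix (Fin 2) (Fin 2) R) (m : ℕ) :
    A ^ m = (X ^ m %ₘ A.charpoly).coeff 1 • A + (X ^ m %ₘ A.charpoly).coeff 0 • 1 := by
  rcases subsingleton_or_nontrivial R with _ | _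
  · exact Subsingleton.elim _ _
  have hdeg : (X ^ m %ₘ A.charpoly).natDegree ≤ 1 :=
    Nat.lt_succ_iff.mp (by simpa using A.natDegree_modByMonic_charpoly_lt (X ^ m))
  rw [pow_eq_aeval_mod_charpoly, aeval_eq_smul_add_smul_one_of_natDegree_le_one hdeg]

theorem geom_sum_eq_pow_sub_one_mul_inv {A : Matrix n n R} (hA : IsUnit (A - 1)) (m : ℕ) :
    ∑ i ∈ Finset.range m, A ^ i = (A ^ m - 1) * (A - 1)⁻¹ := by
  rw [← geom_sum_mul, mul_assoc, mul_nonsing_inv _ ((isUnit_iff_isUnit_det _).mp hA), mul_one]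

end Matrix

/-- Correctness of the projected matrix geometric sum (PMGS) algorithm: with
`F = X^{k+1} mod charpoly(A)`, `f₀ = F.coeff 0`, `f₁ = F.coeff 1`, and `A − I₂`
invertible, `(f₁A + (f₀ − 1)I₂)·(A − I₂)⁻¹·β = Σ_{i=0}^k A^i β`. -/
theorem pmgs_correct {R : Type*} [CommRing R] (A : Matrix (Fin 2) (Fin 2) R)
    (hA : IsUnit (A - 1)) (β : Fin 2 → R) (k : ℕ) :
    ((((X : Polynomial R) ^ (k + 1) %ₘ A.charpoly).coeff 1 • A +
        (((X : Polynomial R) ^ (k + 1) %ₘ A.charpoly).coeff 0 - 1) • (1 : Matrix (Fin 2) (Fin 2) R))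
       * (A - 1)⁻¹) *ᵥ β
      = ∑ i ∈ Finset.range (k + 1), (A ^ i) *ᵥ β := by
  rw [← sum_mulVec, geom_sum_eq_pow_sub_one_mul_inv hA, pow_eq_smul_add_smul_one_of_fin_two,
    sub_smul, one_smul, add_sub_assoc]
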